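/- arXiv:2005.01184 — 3 statements merged into one kernel-verified Lean document; each statement's English description precedes it below -/
import Mathlib

section
/- Let G = (V, R, U, L, D) be a structure with binary relations satisfying the inverses axiom (R(x,y) ↔ L(y,x) and U(x,y) ↔ D(y,x)), the successor axiom (every x has an R-successor and a U-successor), and the cycle axiom (L(y,x) ∧ U(x,z) ∧ R(z,u) → D(u,y)). Then there exists a homomorphism from the standard grid (ℕ×ℕ, R_0, U_0) into (V, R, U), where R_0 = {((i,j),(i+1,j))} and U_0 = {((i,j),(i,j+1))}. -/
/-! Fix an `R`-successor function `f`, a `U`-successor function `g` and a point `v`, and send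
`(i, j)` to `f^[i] (g^[j] v)`: go up `j` steps from `v`, then right `i` steps. Horizontal edges
are `R`-edges by construction. Vertical edges are `U`-edges by induction on `i`: by the inverses
and cycle axioms, an `R`-edge followed by a `U`-edge and an `R`-edge closes up to a square, so
`f` maps `U`-edges to `U`-edges. -/

section Grid

variable {V : Type*}

def gridMap (f g : V → V) (v : V) (p : ℕ × ℕ) : V :=
  f^[p.1] (g^[p.2] v)

theorem gridMap_right {R : V → V → Prop} {f : V → V} (hf : ∀ x, R x (f x)) (g : V → V) (v : V)
    (i j : ℕ) : R (gridMap f g v (i, j)) (gridMap f g v (i + 1, j)) := by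
  simpa only [gridMap, Function.iterate_succ_apply'] using hf _

theorem gridMap_up {U : V → V → Prop} {f g : V → V} (hg : ∀ x, U x (g x))
    (hf : ∀ x y, U x y → U (f x) (f y)) (v : V) (i j : ℕ) :
    U (gridMap f g v (i, j)) (gridMap f g v (i, j + 1)) := by
  induction i with
  | zero => simpa only [gridMap, Function.iterate_zero_apply, Function.iterate_succ_apply']
      using hg _
  | succ i ih => simpa only [gridMap, Function.iterate_succ_apply'] using hf _ _ ih

theorem up_of_right_of_up_of_right {R U L D : V → V → Prop} (hRL : ∀ x y, R x y → L y x)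
    (hDU : ∀ x y, D y x → U x y) (hcyc : ∀ x y z u, L y x → U x z → R z u → D u y)
    {x x' y y' : V} (hx : R x x') (hxy : U x y) (hy : R y y') : U x' y' :=
  hDU _ _ (hcyc _ _ _ _ (hRL _ _ hx) hxy hy)

end Grid

/-- If a (nonempty) structure with binary relations `R, U, L, D` satisfies the
inverses, successor and cycle axioms, then there is a homomorphism from the
standard grid `(ℕ×ℕ, R₀, U₀)` into `(V, R, U)`. -/
theorem homomorphism_from_standard_grid (V : Type) [Nonempty V]
    (R U L D : V → V → Prop)
    (hinv : ∀ x y, (R x y ↔ L y x) ∧ (U x y ↔ D y x))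
    (hsucc : ∀ x, (∃ y, R x y) ∧ (∃ z, U x z))
    (hcyc : ∀ x y z u, L y x → U x z → R z u → D u y) :
    ∃ τ : ℕ × ℕ → V,
      (∀ i j : ℕ, R (τ (i, j)) (τ (i + 1, j))) ∧
      (∀ i j : ℕ, U (τ (i, j)) (τ (i, j + 1))) := by
  choose f hf using fun x => (hsucc x).1
  choose g hg using fun x => (hsucc x).2
  have hf_up : ∀ x y, U x y → U (f x) (f y) := fun x y hxy =>
    up_of_right_of_up_of_right (fun x y => (hinv x y).1.mp) (fun x y => (hinv x y).2.mpr) hcyc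
      (hf x) hxy (hf y)
  let v := Classical.arbitrary V
  exact ⟨gridMap f g v, gridMap_right hf g v, gridMap_up hg hf_up v⟩
end

section
/- Let T be a finite set of tiles (each tile t assigns colors t_R, t_L, t_T, t_B). There exists a T-tiling of ℕ×ℕ if and only if there exists a structure G over the vocabulary {R,U,L,D} ∪ {P_t : t ∈ T} satisfying: the inverses, successor, and cycle axioms; every element belongs to some P_t; the P_t are pairwise disjoint; whenever P_t(x), R(x,y), P_{t'}(y) hold, then t_R = t'_L; and whenever P_t(x), U(x,y), P_{t'}(y) hold, then t_T = t'_B. -/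
/-!
A tiling labels the standard grid on `ℕ × ℕ` (with `L`, `D` the converses of `R`, `U`).
Conversely, the inverses and cycle axioms say that the `R`-successors of `U`-related points
are again `U`-related. Hence, iterating chosen `U`- and then `R`-successors from any point
maps the grid `ℕ × ℕ` into the structure preserving `R` and `U`, and the tile labels of the
image points form a tiling.
-/

/-- A tile: four colors (right, left, top, bottom edges). -/
structure Tile (C : Type) where
  right : C
  left : C
  top : C
  bottom : C

section TilingStructure

variable {C : Type} {V : Type*}

def IsTiling (T : Set (Tile C)) (f : ℕ × ℕ → Tile C) : Prop :=
  (∀ p, f p ∈ T) ∧ (∀ i j : ℕ, (f (i, j)).right = (f (i + 1, j)).left) ∧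
    ∀ i j : ℕ, (f (i, j)).top = (f (i, j + 1)).bottom

/-- The inverses, successor and cycle axioms. -/
def GridAxioms (R U L D : V → V → Prop) : Prop :=
  (∀ x y, (R x y ↔ L y x) ∧ (U x y ↔ D y x)) ∧
    (∀ x, (∃ y, R x y) ∧ (∃ z, U x z)) ∧
    ∀ x y z u, L y x → U x z → R z u → D u y

def IsTileLabelling (T : Set (Tile C)) (R U : V → V → Prop) (P : Tile C → V → Prop) :
    Prop :=
  (∀ x, ∃ t ∈ T, P t x) ∧
    (∀ t t' x, t ∈ T → t' ∈ T → P t x → P t' x → t = t') ∧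
    (∀ t t' x y, t ∈ T → t' ∈ T → P t x → R x y → P t' y → t.right = t'.left) ∧
    ∀ t t' x y, t ∈ T → t' ∈ T → P t x → U x y → P t' y → t.top = t'.bottom

def gridRight (p q : ℕ × ℕ) : Prop := q = (p.1 + 1, p.2)

def gridUp (p q : ℕ × ℕ) : Prop := q = (p.1, p.2 + 1)

theorem gridAxioms_grid : GridAxioms gridRight gridUp (flip gridRight) (flip gridUp) := by
  refine ⟨fun _ _ => ⟨Iff.rfl, Iff.rfl⟩, fun _ => ⟨⟨_, rfl⟩, ⟨_, rfl⟩⟩, ?_⟩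
  rintro x _ _ _ rfl rfl rfl
  rfl

theorem IsTiling.isTileLabelling_grid {T : Set (Tile C)} {f : ℕ × ℕ → Tile C}
    (hf : IsTiling T f) : IsTileLabelling T gridRight gridUp (fun t p => f p = t) := by
  obtain ⟨hfT, hfR, hfU⟩ := hf
  refine ⟨fun p => ⟨f p, hfT p, rfl⟩, ?_, ?_, ?_⟩
  · rintro _ _ p _ _ rfl rfl
    rfl
  · rintro _ _ p _ _ _ rfl rfl rfl
    exact hfR p.1 p.2
  · rintro _ _ p _ _ _ rfl rfl rfl
    exact hfU p.1 p.2

namespace GridAxioms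

variable {R U L D : V → V → Prop}

theorem up_of_right (h : GridAxioms R U L D) {a a' b b' : V}
    (hab : U a b) (ha : R a a') (hb : R b b') : U a' b' :=
  ((h.1 a' b').2).2 (h.2.2 a a' b b' ((h.1 a a').1.1 ha) hab hb)

theorem exists_grid_map (h : GridAxioms R U L D) (x₀ : V) :
    ∃ g : ℕ × ℕ → V,
      (∀ i j, R (g (i, j)) (g (i + 1, j))) ∧ ∀ i j, U (g (i, j)) (g (i, j + 1)) := by
  choose r hr using fun x => (h.2.1 x).1
  choose u hu using fun x => (h.2.1 x).2
  refine ⟨fun p => r^[p.1] (u^[p.2] x₀), fun i j => ?_, fun i j => ?_⟩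
  · simpa only [Function.iterate_succ_apply'] using hr _
  · induction i with
    | zero => simpa only [Function.iterate_zero_apply, Function.iterate_succ_apply'] using hu _
    | succ i ih => simpa only [Function.iterate_succ_apply'] using h.up_of_right ih (hr _) (hr _)

end GridAxioms

theorem IsTileLabelling.exists_isTiling {T : Set (Tile C)} {R U : V → V → Prop}
    {P : Tile C → V → Prop} (hP : IsTileLabelling T R U P) {g : ℕ × ℕ → V}
    (hgR : ∀ i j, R (g (i, j)) (g (i + 1, j))) (hgU : ∀ i j, U (g (i, j)) (g (i, j + 1))) :
    ∃ f, IsTiling T f := by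
  choose t htT htP using hP.1
  exact ⟨fun p => t (g p), fun _ => htT _,
    fun i j => hP.2.2.1 _ _ _ _ (htT _) (htT _) (htP _) (hgR i j) (htP _),
    fun i j => hP.2.2.2 _ _ _ _ (htT _) (htT _) (htP _) (hgU i j) (htP _)⟩

end TilingStructure

theorem tiling_iff_structure_general (C : Type) (T : Set (Tile C)) :
    (∃ f : ℕ × ℕ → Tile C, (∀ p, f p ∈ T) ∧
      (∀ i j : ℕ, (f (i, j)).right = (f (i + 1, j)).left) ∧
      (∀ i j : ℕ, (f (i, j)).top = (f (i, j + 1)).bottom)) ↔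
    (∃ (V : Type) (R U L D : V → V → Prop) (P : Tile C → V → Prop),
      Nonempty V ∧
      (∀ x y, (R x y ↔ L y x) ∧ (U x y ↔ D y x)) ∧
      (∀ x, (∃ y, R x y) ∧ (∃ z, U x z)) ∧
      (∀ x y z u, L y x → U x z → R z u → D u y) ∧
      (∀ x, ∃ t ∈ T, P t x) ∧
      (∀ t t' x, t ∈ T → t' ∈ T → P t x → P t' x → t = t') ∧
      (∀ t t' x y, t ∈ T → t' ∈ T → P t x → R x y → P t' y →
        t.right = t'.left) ∧
      (∀ t t' x y, t ∈ T → t' ∈ T → P t x → U x y → P t' y →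
        t.top = t'.bottom)) := by
  constructor
  · rintro ⟨f, hf⟩
    obtain ⟨hinv, hsucc, hcyc⟩ := gridAxioms_grid
    obtain ⟨hcov, hdisj, hR, hU⟩ := IsTiling.isTileLabelling_grid hf
    exact ⟨ℕ × ℕ, _, _, _, _, _, ⟨(0, 0)⟩, hinv, hsucc, hcyc, hcov, hdisj, hR, hU⟩
  · rintro ⟨V, R, U, L, D, P, ⟨x₀⟩, hinv, hsucc, hcyc, hcov, hdisj, hR, hU⟩
    obtain ⟨g, hgR, hgU⟩ := GridAxioms.exists_grid_map ⟨hinv, hsucc, hcyc⟩ x₀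
    exact IsTileLabelling.exists_isTiling ⟨hcov, hdisj, hR, hU⟩ hgR hgU

/-- A finite set of tiles `T` tiles `ℕ × ℕ` iff there exists a structure over
the vocabulary `{R,U,L,D} ∪ {P_t : t ∈ T}` satisfying the inverses, successor
and cycle axioms together with the tiling constraints. -/
theorem tiling_iff_structure (C : Type) (T : Set (Tile C)) (hT : T.Finite) :
    (∃ f : ℕ × ℕ → Tile C, (∀ p, f p ∈ T) ∧
      (∀ i j : ℕ, (f (i, j)).right = (f (i + 1, j)).left) ∧
      (∀ i j : ℕ, (f (i, j)).top = (f (i, j + 1)).bottom)) ↔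
    (∃ (V : Type) (R U L D : V → V → Prop) (P : Tile C → V → Prop),
      Nonempty V ∧
      (∀ x y, (R x y ↔ L y x) ∧ (U x y ↔ D y x)) ∧
      (∀ x, (∃ y, R x y) ∧ (∃ z, U x z)) ∧
      (∀ x y z u, L y x → U x z → R z u → D u y) ∧
      (∀ x, ∃ t ∈ T, P t x) ∧
      (∀ t t' x, t ∈ T → t' ∈ T → P t x → P t' x → t = t') ∧
      (∀ t t' x y, t ∈ T → t' ∈ T → P t x → R x y → P t' y →
        t.right = t'.left) ∧
      (∀ t t' x y, t ∈ T → t' ∈ T → P t x → U x y → P t' y →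
        t.top = t'.bottom)) :=
  tiling_iff_structure_general C T
end

section
/- If a relational Herbrand sentence contains a conjunct x_i = x_j with distinct variables where x_i is existentially quantified and x_j is universally quantified in its scope (or both are universally quantified), then the sentence is satisfiable if and only if it has a model with a one-element domain. -/
/-!
Skolemize: a model of the prefix yields a map `F` sending any values `g` of the variables to a
satisfying assignment that keeps the universal values of `g` and whose entry at `k` depends only on
`g` up to `k`. Changing only the value of the universal `xⱼ` therefore leaves `xᵢ` (`i < j`) fixed
while `xⱼ` takes any value, and the conjunct `xᵢ = xⱼ` forces any two elements to be equal.
-/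

/-- Atomic formulas over a relational vocabulary `σ` (with arities `ar`) and
`n` variables: relation atoms and equality atoms. -/
inductive HAtom (σ : Type) (ar : σ → ℕ) (n : ℕ) : Type
  | rel (r : σ) (args : Fin (ar r) → Fin n) : HAtom σ ar n
  | eq (i j : Fin n) : HAtom σ ar n

/-- A literal: a polarity (`true` = positive) together with an atom. -/
def HLit (σ : Type) (ar : σ → ℕ) (n : ℕ) : Type := Bool × HAtom σ ar n

/-- Satisfaction of an atom under an interpretation `I` and assignment `α`. -/
def atomSat {σ : Type} {ar : σ → ℕ} {n : ℕ} {D : Type}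
    (I : (r : σ) → (Fin (ar r) → D) → Prop) (α : Fin n → D) :
    HAtom σ ar n → Prop
  | .rel r args => I r (fun i => α (args i))
  | .eq i j => α i = α j

/-- Satisfaction of a literal. -/
def litSat {σ : Type} {ar : σ → ℕ} {n : ℕ} {D : Type}
    (I : (r : σ) → (Fin (ar r) → D) → Prop) (α : Fin n → D)
    (l : HLit σ ar n) : Prop :=
  if l.1 then atomSat I α l.2 else ¬ atomSat I α l.2

/-- Evaluation of a quantifier prefix (`true` = universal, `false` =
existential) over a matrix depending on the assignment; the first quantifier
binds variable `0`. -/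
def prefixSat (D : Type) :
    (qs : List Bool) → ((Fin qs.length → D) → Prop) → Prop
  | [], P => P (fun i => i.elim0)
  | q :: qs, P =>
      if q then ∀ d : D, prefixSat D qs (fun f => P (Fin.cons d f))
      else ∃ d : D, prefixSat D qs (fun f => P (Fin.cons d f))

/-- Satisfaction of a relational Herbrand sentence given by a quantifier
prefix `qs` and a conjunction of literals `lits`. -/
def sentSat (D : Type) {σ : Type} {ar : σ → ℕ}
    (I : (r : σ) → (Fin (ar r) → D) → Prop) (qs : List Bool)
    (lits : List (HLit σ ar qs.length)) : Prop :=
  prefixSat D qs (fun α => ∀ l ∈ lits, litSat I α l)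

section Skolemization

variable {D : Type}

structure IsSkolemization (qs : List Bool) (P : (Fin qs.length → D) → Prop)
    (F : (Fin qs.length → D) → Fin qs.length → D) : Prop where
  sat : ∀ g, P (F g)
  apply_of_forall : ∀ g k, qs.get k = true → F g k = g k
  apply_congr : ∀ g g' k, (∀ m ≤ k, g m = g' m) → F g k = F g' k

theorem prefixSat_cons_exists_head {q : Bool} {qs : List Bool}
    {P : (Fin (qs.length + 1) → D) → Prop} (h : prefixSat D (q :: qs) P) :
    ∃ c : D → D, (q = true → ∀ x, c x = x) ∧
      ∀ x, prefixSat D qs (fun f => P (Fin.cons (c x) f)) := by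
  cases q with
  | false =>
    obtain ⟨d, hd⟩ := h
    exact ⟨fun _ => d, nofun, fun _ => hd⟩
  | true => exact ⟨id, fun _ _ => rfl, h⟩

theorem exists_isSkolemization_of_prefixSat :
    ∀ {qs : List Bool} {P : (Fin qs.length → D) → Prop},
      prefixSat D qs P → ∃ F, IsSkolemization qs P F
  | [], _, h => ⟨fun _ k => k.elim0, ⟨fun _ => h, fun _ k => k.elim0, fun _ _ k => k.elim0⟩⟩
  | q :: qs, P, h => by
    obtain ⟨c, hc, hsat⟩ := prefixSat_cons_exists_head h
    choose F hF using fun x => exists_isSkolemization_of_prefixSat (hsat x)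
    refine ⟨fun g => Fin.cons (c (g 0)) (F (g 0) (Fin.tail g)), ⟨fun g => (hF _).sat _, ?_, ?_⟩⟩
    · intro g k hk
      induction k using Fin.cases with
      | zero => exact hc hk _
      | succ m => exact (hF _).apply_of_forall _ m hk
    · intro g g' k hgg'
      have h0 : g 0 = g' 0 := hgg' 0 (Fin.zero_le k)
      induction k using Fin.cases with
      | zero => simp only [Fin.cons_zero, h0]
      | succ m =>
        simp only [Fin.cons_succ, h0]
        exact (hF _).apply_congr _ _ m fun m' hm' => hgg' m'.succ (Fin.succ_le_succ_iff.2 hm')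

theorem subsingleton_of_prefixSat_of_imp_eq {qs : List Bool}
    {P : (Fin qs.length → D) → Prop} {i j : Fin qs.length} (hsat : prefixSat D qs P)
    (hij : i < j) (hj : qs.get j = true) (hP : ∀ α, P α → α i = α j) :
    Subsingleton D := by
  obtain ⟨F, hF⟩ := exists_isSkolemization_of_prefixSat hsat
  refine ⟨fun x y => ?_⟩
  let g := Function.update (fun _ => x) j y
  have hi : F (fun _ => x) i = F g i := hF.apply_congr _ _ i fun m hm =>
    (Function.update_of_ne (hm.trans_lt hij).ne y fun _ => x).symm
  calc x = F (fun _ => x) j := (hF.apply_of_forall (fun _ => x) j hj).symm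
    _ = F (fun _ => x) i := (hP _ (hF.sat _)).symm
    _ = F g i := hi
    _ = F g j := hP _ (hF.sat g)
    _ = y := (hF.apply_of_forall g j hj).trans (Function.update_self j y fun _ => x)

end Skolemization

/-- If a relational Herbrand sentence contains a conjunct `xᵢ = xⱼ` with
distinct variables where `xᵢ` is existentially and `xⱼ` universally quantified
in its scope (or both are universally quantified), then it is satisfiable iff
it has a model with a one-element domain. -/
theorem herbrand_pos_eq_sat_iff_one_element (σ : Type) (ar : σ → ℕ)
    (qs : List Bool) (lits : List (HLit σ ar qs.length))
    (i j : Fin qs.length) (hij : i < j)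
    (hlit : (true, HAtom.eq i j) ∈ lits)
    (hq : (qs.get i = false ∧ qs.get j = true) ∨
          (qs.get i = true ∧ qs.get j = true)) :
    (∃ (D : Type) (I : (r : σ) → (Fin (ar r) → D) → Prop),
        Nonempty D ∧ sentSat D I qs lits) ↔
      (∃ (D : Type) (I : (r : σ) → (Fin (ar r) → D) → Prop),
        (∃ d : D, ∀ x : D, x = d) ∧ sentSat D I qs lits) := by
  constructor
  · rintro ⟨D, I, ⟨d⟩, hsat⟩
    have : Subsingleton D := subsingleton_of_prefixSat_of_imp_eq hsat hij
      (hq.elim And.right And.right) fun α hα => hα _ hlit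
    exact ⟨D, I, ⟨d, fun x => Subsingleton.elim x d⟩, hsat⟩
  · rintro ⟨D, I, ⟨d, -⟩, hsat⟩
    exact ⟨D, I, ⟨d⟩, hsat⟩
end
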